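/- arXiv:math/0610593 — 2 statements merged into one kernel-verified Lean document; each statement's English description precedes it below -/
import Mathlib

section
/- Let d ≥ 1, 0 < s < 1 and ξ ∈ ℝ^d. Then ∫_{ℝ^d} |e^{i ξ·z} − 1|² / |z|^{d+2s} dz = a_{s,d}^{-1} |ξ|^{2s}, where a_{s,d} := 2^{2s-1} π^{-d/2} Γ((d+2s)/2) / |Γ(-s)|; i.e., the integral equals 2^{1-2s} π^{d/2} |Γ(-s)| Γ((d+2s)/2)^{-1} |ξ|^{2s}. -/
open MeasureTheory Real Set
open Filter Complex
open scoped ENNReal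

noncomputable section

/-- The constant `a_{s,d} = 2^{2s-1} π^{-d/2} Γ((d+2s)/2) / |Γ(-s)|`. -/
def aConst (s : ℝ) (d : ℕ) : ℝ :=
  2 ^ (2 * s - 1) * Real.pi ^ (-(d : ℝ) / 2) * Real.Gamma ((d + 2 * s) / 2) /
    |Real.Gamma (-s)|

section Aux

lemma aux_oneSubExp_nonneg {u : ℝ} (hu : 0 ≤ u) : 0 ≤ 1 - Real.exp (-u) := by
  have : Real.exp (-u) ≤ 1 := Real.exp_le_one_iff.mpr (by linarith)
  linarith

lemma aux_oneSubExp_le {u : ℝ} : 1 - Real.exp (-u) ≤ u := by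
  have := Real.add_one_le_exp (-u); linarith

lemma aux_norm_exp_I_sub_one (θ : ℝ) :
    ‖Complex.exp (Complex.I * (θ:ℂ)) - 1‖ ^ 2 = 2 - 2 * Real.cos θ := by
  have h : Complex.exp (Complex.I * (θ:ℂ)) - 1
      = Complex.ofReal (Real.cos θ - 1) + Complex.ofReal (Real.sin θ) * Complex.I := by
    rw [mul_comm, Complex.exp_mul_I]; push_cast; ring
  rw [h, Complex.sq_norm, Complex.normSq_add_mul_I]
  nlinarith [Real.sin_sq_add_cos_sq θ]

lemma aux_final_arith {s : ℝ} (hs0 : 0 < s) (hs1 : s < 1) {d : ℕ} (hd : 1 ≤ d) {x : ℝ}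
    (hx : 0 < x) :
    2 * π ^ ((d:ℝ)/2) * ((x ^ 2 / 4) ^ s * (Real.Gamma (1 - s) / s)) /
        Real.Gamma (((d:ℝ) + 2 * s)/2)
      = (aConst s d)⁻¹ * x ^ (2 * s) := by
  have hΓp : 0 < Real.Gamma (((d:ℝ) + 2 * s)/2) :=
    Real.Gamma_pos_of_pos (by positivity)
  have hΓ1s : 0 < Real.Gamma (1 - s) := Real.Gamma_pos_of_pos (by linarith)
  have habs : |Real.Gamma (-s)| = Real.Gamma (1 - s) / s := by
    have h := Real.Gamma_add_one (s := -s) (neg_ne_zero.mpr hs0.ne')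
    have h2 : Real.Gamma (-s) = -(Real.Gamma (1 - s) / s) := by
      rw [show (1:ℝ) - s = -s + 1 by ring, h]
      field_simp
    rw [h2, abs_neg, abs_of_pos (by positivity)]
  have h4 : (x ^ 2 / 4 : ℝ) ^ s = x ^ (2 * s) * ((2:ℝ) ^ (2 * s))⁻¹ := by
    rw [Real.div_rpow (sq_nonneg x) (by norm_num),
      show (x:ℝ) ^ 2 = x ^ ((2:ℕ):ℝ) from (Real.rpow_natCast x 2).symm,
      ← Real.rpow_mul hx.le,
      show (4:ℝ) = 2 ^ ((2:ℕ):ℝ) by rw [Real.rpow_natCast]; norm_num,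
      ← Real.rpow_mul (by norm_num : (0:ℝ) ≤ 2)]
    push_cast
    rw [div_eq_mul_inv]
  have hπ : π ^ (-(d:ℝ)/2) = (π ^ ((d:ℝ)/2))⁻¹ := by
    rw [show (-(d:ℝ)/2) = -((d:ℝ)/2) by ring, Real.rpow_neg Real.pi_pos.le]
  have h2s : (2:ℝ) ^ (2 * s - 1) = 2 ^ (2 * s) / 2 := by
    rw [Real.rpow_sub (by norm_num), Real.rpow_one]
  rw [aConst, habs, h4, hπ, h2s]
  have hπp : (0:ℝ) < π ^ ((d:ℝ)/2) := Real.rpow_pos_of_pos Real.pi_pos _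
  have h2p : (0:ℝ) < (2:ℝ) ^ (2*s) := Real.rpow_pos_of_pos (by norm_num) _
  field_simp

lemma aux_integrableK {s : ℝ} (hs0 : 0 < s) (hs1 : s < 1) :
    IntegrableOn (fun u : ℝ => u ^ (-s - 1) * (1 - Real.exp (-u))) (Ioi 0) := by
  have hmeas : AEStronglyMeasurable (fun u : ℝ => u ^ (-s - 1) * (1 - Real.exp (-u)))
      (volume.restrict (Ioi (0:ℝ))) := by
    apply Measurable.aestronglyMeasurable; fun_prop
  have key : ∀ u : ℝ, 0 < u → 0 ≤ u ^ (-s - 1) * (1 - Real.exp (-u)) := fun u hu =>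
    mul_nonneg (Real.rpow_nonneg hu.le _) (aux_oneSubExp_nonneg hu.le)
  rw [← Ioc_union_Ioi_eq_Ioi (zero_le_one' ℝ), integrableOn_union]
  constructor
  · have hint : IntegrableOn (fun u : ℝ => u ^ (-s)) (Ioc (0:ℝ) 1) := by
      have := intervalIntegral.intervalIntegrable_rpow' (a := 0) (b := 1) (r := -s) (by linarith)
      rwa [intervalIntegrable_iff_integrableOn_Ioc_of_le zero_le_one] at this
    refine Integrable.mono' hint
      (hmeas.mono_measure (Measure.restrict_mono Ioc_subset_Ioi_self le_rfl)) ?_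
    filter_upwards [ae_restrict_mem measurableSet_Ioc] with u hu
    rw [Real.norm_of_nonneg (key u hu.1)]
    calc u ^ (-s - 1) * (1 - Real.exp (-u)) ≤ u ^ (-s - 1) * u :=
          mul_le_mul_of_nonneg_left aux_oneSubExp_le (Real.rpow_nonneg hu.1.le _)
      _ = u ^ (-s) := by
          rw [Real.rpow_sub hu.1, Real.rpow_one, div_mul_cancel₀ _ hu.1.ne']
  · have hint : IntegrableOn (fun u : ℝ => u ^ (-s - 1)) (Ioi (1:ℝ)) :=
      integrableOn_Ioi_rpow_of_lt (by linarith) one_pos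
    refine Integrable.mono' hint
      (hmeas.mono_measure (Measure.restrict_mono (Ioi_subset_Ioi zero_le_one) le_rfl)) ?_
    filter_upwards [ae_restrict_mem measurableSet_Ioi] with u hu
    have hu1 : (0:ℝ) < u := lt_trans one_pos hu
    rw [Real.norm_of_nonneg (key u hu1)]
    exact mul_le_of_le_one_right (Real.rpow_nonneg hu1.le _)
      (by linarith [Real.exp_pos (-u), aux_oneSubExp_nonneg hu1.le])

lemma aux_integralK {s : ℝ} (hs0 : 0 < s) (hs1 : s < 1) :
    ∫ u in Ioi (0:ℝ), u ^ (-s - 1) * (1 - Real.exp (-u)) = Real.Gamma (1 - s) / s := by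
  have hΓ : IntegrableOn (fun u : ℝ => Real.exp (-u) * u ^ (-s)) (Ioi 0) := by
    have := Real.GammaIntegral_convergent (s := 1 - s) (by linarith)
    simpa using this
  set F : ℝ → ℝ := fun u => -s⁻¹ * (u ^ (-s) * (1 - Real.exp (-u))) with hF
  have hderiv : ∀ u ∈ Ioi (0:ℝ), HasDerivAt F
      (u ^ (-s - 1) * (1 - Real.exp (-u)) - s⁻¹ * (u ^ (-s) * Real.exp (-u))) u := by
    intro u hu
    have h1 : HasDerivAt (fun u : ℝ => u ^ (-s)) (-s * u ^ (-s - 1)) u :=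
      Real.hasDerivAt_rpow_const (Or.inl (ne_of_gt hu))
    have h2 : HasDerivAt (fun u : ℝ => 1 - Real.exp (-u)) (Real.exp (-u)) u := by
      have := ((Real.hasDerivAt_exp (-u)).comp u (hasDerivAt_neg u)).const_sub 1
      simpa using this
    have := ((h1.mul h2).const_mul (-s⁻¹))
    refine this.congr_deriv ?_
    have hk : s⁻¹ * s = 1 := inv_mul_cancel₀ hs0.ne'
    linear_combination u ^ (-s - 1) * (1 - Real.exp (-u)) * hk
  have htop : Tendsto F atTop (nhds 0) := by
    have h1 : Tendsto (fun u : ℝ => u ^ (-s)) atTop (nhds 0) :=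
      tendsto_rpow_neg_atTop hs0
    have h2 : Tendsto (fun u : ℝ => 1 - Real.exp (-u)) atTop (nhds 1) := by
      have := Real.tendsto_exp_neg_atTop_nhds_zero
      have := this.const_sub 1
      simpa using this
    have := (h1.mul h2).const_mul (-s⁻¹)
    simpa [hF, neg_mul] using this
  have hcont : ContinuousWithinAt F (Ici 0) 0 := by
    have hF0 : F 0 = 0 := by simp [hF, Real.rpow_neg le_rfl, Real.zero_rpow hs0.ne']
    rw [ContinuousWithinAt, hF0]
    have hb : Tendsto (fun u : ℝ => u ^ (-s) * (1 - Real.exp (-u))) (nhdsWithin 0 (Ici 0))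
        (nhds 0) := by
      apply squeeze_zero' (g := fun u : ℝ => u ^ (1 - s))
      · filter_upwards [self_mem_nhdsWithin] with u (hu : 0 ≤ u)
        exact mul_nonneg (Real.rpow_nonneg hu _) (aux_oneSubExp_nonneg hu)
      · filter_upwards [self_mem_nhdsWithin] with u (hu : 0 ≤ u)
        rcases eq_or_lt_of_le hu with h | h
        · simp [← h, Real.zero_rpow, hs0.ne', (by linarith : 1 - s ≠ 0),
            Real.zero_rpow (by intro hc; linarith [hc] : -s ≠ 0)]
        · calc u ^ (-s) * (1 - Real.exp (-u)) ≤ u ^ (-s) * u :=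
              mul_le_mul_of_nonneg_left aux_oneSubExp_le (Real.rpow_nonneg hu _)
            _ = u ^ (1 - s) := by
              rw [Real.rpow_sub h, Real.rpow_one, Real.rpow_neg h.le, inv_mul_eq_div]
      · have : ContinuousWithinAt (fun u : ℝ => u ^ (1 - s)) (Ici 0) 0 :=
          (Real.continuousAt_rpow_const 0 _ (Or.inr (by linarith))).continuousWithinAt
        have h0 : (0:ℝ) ^ (1 - s) = 0 := Real.zero_rpow (by linarith)
        rw [ContinuousWithinAt, h0] at this
        exact this
    have := hb.const_mul (-s⁻¹)
    simpa [hF, mul_comm] using this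
  have hfint : IntegrableOn (fun u : ℝ =>
      u ^ (-s - 1) * (1 - Real.exp (-u)) - s⁻¹ * (u ^ (-s) * Real.exp (-u))) (Ioi 0) := by
    apply (aux_integrableK hs0 hs1).sub
    apply Integrable.const_mul
    simpa [mul_comm, IntegrableOn] using hΓ
  have hint2 : IntegrableOn (fun u : ℝ => s⁻¹ * (u ^ (-s) * Real.exp (-u))) (Ioi 0) := by
    apply Integrable.const_mul
    simpa [mul_comm, IntegrableOn] using hΓ
  have hFTC := integral_Ioi_of_hasDerivAt_of_tendsto hcont hderiv hfint htop
  have hF0 : F 0 = 0 := by simp [hF, Real.zero_rpow hs0.ne']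
  rw [hF0, sub_zero, integral_sub (aux_integrableK hs0 hs1) hint2] at hFTC
  have hΓval : ∫ u in Ioi (0:ℝ), s⁻¹ * (u ^ (-s) * Real.exp (-u)) = s⁻¹ * Real.Gamma (1 - s) := by
    rw [integral_const_mul]
    congr 1
    rw [Real.Gamma_eq_integral (by linarith : (0:ℝ) < 1 - s)]
    apply setIntegral_congr_fun measurableSet_Ioi
    intro u hu
    show u ^ (-s) * rexp (-u) = rexp (-u) * u ^ (1 - s - 1)
    rw [mul_comm]
    norm_num
  rw [hΓval] at hFTC
  have : ∫ u in Ioi (0:ℝ), u ^ (-s - 1) * (1 - Real.exp (-u)) = s⁻¹ * Real.Gamma (1 - s) := by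
    linarith
  rw [this]; field_simp

lemma aux_integralJ {s c : ℝ} (hs0 : 0 < s) (hs1 : s < 1) (hc : 0 < c) :
    ∫ t in Ioi (0:ℝ), t ^ (s - 1) * (1 - Real.exp (-(c / t)))
      = c ^ s * (∫ u in Ioi (0:ℝ), u ^ (-s - 1) * (1 - Real.exp (-u))) := by
  have h1 : ∫ t in Ioi (0:ℝ), t ^ (s - 1) * (1 - Real.exp (-(c / t)))
      = ∫ x in Ioi (0:ℝ), x ^ (-s - 1) * (1 - Real.exp (-(c * x))) := by
    rw [← integral_comp_rpow_Ioi (fun t => t ^ (s - 1) * (1 - Real.exp (-(c / t))))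
      (p := -1) (by norm_num)]
    apply setIntegral_congr_fun measurableSet_Ioi
    intro x hx
    have hx0 : (0:ℝ) < x := hx
    simp only [smul_eq_mul, abs_neg, abs_one, one_mul]
    rw [show ((x:ℝ) ^ (-1:ℝ)) ^ (s-1) = x ^ ((-1) * (s-1)) from (Real.rpow_mul hx0.le _ _).symm,
      Real.rpow_neg_one x, show (c / x⁻¹) = c * x from by field_simp, ← mul_assoc,
      ← Real.rpow_add hx0]
    norm_num
    left; ring_nf
  have h2 := integral_comp_mul_left_Ioi
    (fun y : ℝ => y ^ (-s - 1) * (1 - Real.exp (-y))) 0 hc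
  rw [mul_zero] at h2
  rw [h1]
  calc ∫ x in Ioi (0:ℝ), x ^ (-s - 1) * (1 - Real.exp (-(c * x)))
      = ∫ x in Ioi (0:ℝ), c ^ (s+1) * ((c * x) ^ (-s - 1) * (1 - Real.exp (-(c * x)))) := by
        apply setIntegral_congr_fun measurableSet_Ioi
        intro x hx
        show x ^ (-s - 1) * (1 - rexp (-(c * x)))
          = c ^ (s+1) * ((c * x) ^ (-s - 1) * (1 - Real.exp (-(c * x))))
        rw [Real.mul_rpow hc.le (le_of_lt hx), ← mul_assoc, ← mul_assoc, ← Real.rpow_add hc]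
        norm_num
    _ = c ^ (s+1) * ∫ x in Ioi (0:ℝ), (c * x) ^ (-s - 1) * (1 - Real.exp (-(c * x))) :=
        integral_const_mul _ _
    _ = c ^ (s+1) * (c⁻¹ * ∫ u in Ioi (0:ℝ), u ^ (-s - 1) * (1 - Real.exp (-u))) := by
        rw [h2]; simp [smul_eq_mul]
    _ = c ^ s * (∫ u in Ioi (0:ℝ), u ^ (-s - 1) * (1 - Real.exp (-u))) := by
        rw [← mul_assoc, Real.rpow_add_one hc.ne', mul_assoc (c ^ s), mul_inv_cancel₀ hc.ne',
          mul_one]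

lemma aux_integrableJ {s c : ℝ} (hs0 : 0 < s) (hs1 : s < 1) (hc : 0 < c) :
    IntegrableOn (fun t : ℝ => t ^ (s - 1) * (1 - Real.exp (-(c / t)))) (Ioi 0) := by
  have hmeas : AEStronglyMeasurable (fun t : ℝ => t ^ (s - 1) * (1 - Real.exp (-(c / t))))
      (volume.restrict (Ioi (0:ℝ))) := by
    apply Measurable.aestronglyMeasurable; fun_prop
  have key : ∀ t : ℝ, 0 < t → 0 ≤ t ^ (s - 1) * (1 - Real.exp (-(c / t))) := fun t ht =>
    mul_nonneg (Real.rpow_nonneg ht.le _) (aux_oneSubExp_nonneg (div_nonneg hc.le ht.le))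
  rw [← Ioc_union_Ioi_eq_Ioi (zero_le_one' ℝ), integrableOn_union]
  constructor
  · have hint : IntegrableOn (fun t : ℝ => t ^ (s - 1)) (Ioc (0:ℝ) 1) := by
      have := intervalIntegral.intervalIntegrable_rpow' (a := 0) (b := 1) (r := s - 1)
        (by linarith)
      rwa [intervalIntegrable_iff_integrableOn_Ioc_of_le zero_le_one] at this
    refine Integrable.mono' hint
      (hmeas.mono_measure (Measure.restrict_mono Ioc_subset_Ioi_self le_rfl)) ?_
    filter_upwards [ae_restrict_mem measurableSet_Ioc] with t ht
    rw [Real.norm_of_nonneg (key t ht.1)]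
    refine mul_le_of_le_one_right (Real.rpow_nonneg ht.1.le _) ?_
    linarith [Real.exp_pos (-(c / t)), aux_oneSubExp_nonneg (div_nonneg hc.le ht.1.le)]
  · have hint : IntegrableOn (fun t : ℝ => c * t ^ (s - 2)) (Ioi (1:ℝ)) :=
      (integrableOn_Ioi_rpow_of_lt (by linarith) one_pos).const_mul c
    refine Integrable.mono' hint
      (hmeas.mono_measure (Measure.restrict_mono (Ioi_subset_Ioi zero_le_one) le_rfl)) ?_
    filter_upwards [ae_restrict_mem measurableSet_Ioi] with t ht
    have ht1 : (0:ℝ) < t := lt_trans one_pos ht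
    rw [Real.norm_of_nonneg (key t ht1)]
    calc t ^ (s - 1) * (1 - Real.exp (-(c / t))) ≤ t ^ (s - 1) * (c / t) :=
          mul_le_mul_of_nonneg_left aux_oneSubExp_le (Real.rpow_nonneg ht1.le _)
      _ = c * t ^ (s - 2) := by
          rw [show s - 1 = (s - 2) + 1 by ring, Real.rpow_add_one ht1.ne']
          field_simp

end Aux

section Gauss

variable {d : ℕ}
local notation "E" => EuclideanSpace ℝ (Fin d)

lemma aux_integrable_gauss {t : ℝ} (ht : 0 < t) :
    Integrable (fun z : E => Real.exp (-(t * ‖z‖ ^ 2))) := by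
  have h := GaussianFourier.integrable_cexp_neg_mul_sq_norm_add
    (V := E) (b := (t:ℂ)) (by simpa using ht) 0 0
  have := h.re
  apply this.congr
  filter_upwards with z
  simp [Complex.exp_re, ← Complex.ofReal_pow]

lemma aux_integrable_cos_gauss {t : ℝ} (ht : 0 < t) (ξ : E) :
    Integrable (fun z : E =>
      (2 - 2 * Real.cos (inner ℝ ξ z : ℝ)) * Real.exp (-(t * ‖z‖ ^ 2))) := by
  apply Integrable.mono' ((aux_integrable_gauss (d := d) ht).const_mul 4)
  · apply Measurable.aestronglyMeasurable
    apply Measurable.mul _ (by fun_prop)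
    exact (continuous_const.sub (continuous_const.mul (Real.continuous_cos.comp
      (Continuous.inner continuous_const continuous_id)))).measurable
  · filter_upwards with z
    have h1 := Real.neg_one_le_cos (inner ℝ ξ z : ℝ)
    have h2 := Real.cos_le_one (inner ℝ ξ z : ℝ)
    have h3 := Real.exp_pos (-(t * ‖z‖ ^ 2))
    rw [Real.norm_of_nonneg (by nlinarith)]
    nlinarith

lemma aux_gauss_integral {t : ℝ} (ht : 0 < t) (ξ : E) :
    ∫ z : E, (2 - 2 * Real.cos (inner ℝ ξ z : ℝ)) * Real.exp (-(t * ‖z‖ ^ 2))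
      = (π / t) ^ ((d:ℝ) / 2) * (2 - 2 * Real.exp (-(‖ξ‖ ^ 2 / (4 * t)))) := by
  have htc : 0 < (t:ℂ).re := by simpa using ht
  have hcos : ∫ z : E, Real.cos (inner ℝ ξ z : ℝ) * Real.exp (-(t * ‖z‖ ^ 2))
      = (π / t) ^ ((d:ℝ) / 2) * Real.exp (-(‖ξ‖ ^ 2 / (4 * t))) := by
    have hint := GaussianFourier.integrable_cexp_neg_mul_sq_norm_add
      (V := E) (b := (t:ℂ)) htc Complex.I ξ
    have hval := GaussianFourier.integral_cexp_neg_mul_sq_norm_add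
      (V := E) (b := (t:ℂ)) htc Complex.I ξ
    have hre := integral_re hint
    rw [hval] at hre
    have hlhs : ∫ z : E, RCLike.re (cexp (-(t:ℂ) * ‖z‖ ^ 2 + Complex.I * (inner ℝ ξ z : ℝ)))
        = ∫ z : E, Real.cos (inner ℝ ξ z : ℝ) * Real.exp (-(t * ‖z‖ ^ 2)) := by
      congr 1; funext z
      show (cexp (-(t:ℂ) * ‖z‖ ^ 2 + Complex.I * (inner ℝ ξ z : ℝ))).re = _
      rw [Complex.exp_re]
      simp [Complex.add_re, Complex.mul_re, Complex.add_im, Complex.mul_im,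
        ← Complex.ofReal_pow]
      ring
    rw [hlhs] at hre
    rw [hre]
    have hd2 : ((Module.finrank ℝ (EuclideanSpace ℝ (Fin d)) : ℂ)) / 2 = (((d:ℝ)/2 : ℝ) : ℂ) := by
      rw [finrank_euclideanSpace_fin]; push_cast; ring
    have hπt : (0:ℝ) ≤ π / t := div_nonneg Real.pi_pos.le ht.le
    rw [show ((π:ℂ) / (t:ℂ)) = (((π/t : ℝ)):ℂ) by push_cast; ring, hd2,
      ← Complex.ofReal_cpow hπt]
    have : Complex.I ^ 2 * (‖ξ‖:ℂ) ^ 2 / (4 * (t:ℂ)) = (((-(‖ξ‖^2/(4*t)) : ℝ)):ℂ) := by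
      rw [Complex.I_sq]; push_cast; field_simp
    rw [this, ← Complex.ofReal_exp, ← Complex.ofReal_mul]
    simp
    left
    rw [show (-((‖ξ‖:ℂ) ^ 2 / (4 * (t:ℂ)))) = ((-(‖ξ‖ ^ 2 / (4 * t)) : ℝ) : ℂ) by push_cast; ring,
      ← Complex.ofReal_exp, Complex.ofReal_re]
  have h1 : ∫ z : E, Real.exp (-(t * ‖z‖ ^ 2)) = (π / t) ^ ((d:ℝ) / 2) := by
    have := GaussianFourier.integral_rexp_neg_mul_sq_norm (V := E) ht
    rw [finrank_euclideanSpace_fin] at this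
    rw [← this]
    congr 1; funext z; ring_nf
  have hint1 := aux_integrable_gauss (d := d) ht
  have hint2 : Integrable (fun z : E =>
      Real.cos (inner ℝ ξ z : ℝ) * Real.exp (-(t * ‖z‖ ^ 2))) := by
    have hint := (GaussianFourier.integrable_cexp_neg_mul_sq_norm_add
      (V := E) (b := (t:ℂ)) htc Complex.I ξ).re
    apply hint.congr
    filter_upwards with z
    show (cexp (-(t:ℂ) * ‖z‖ ^ 2 + Complex.I * (inner ℝ ξ z : ℝ))).re = _
    rw [Complex.exp_re]
    simp [Complex.add_re, Complex.mul_re, Complex.add_im, Complex.mul_im,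
      ← Complex.ofReal_pow]
    ring
  have expand : ∀ z : E, (2 - 2 * Real.cos (inner ℝ ξ z : ℝ)) * Real.exp (-(t * ‖z‖ ^ 2))
      = 2 * Real.exp (-(t * ‖z‖ ^ 2))
        - 2 * (Real.cos (inner ℝ ξ z : ℝ) * Real.exp (-(t * ‖z‖ ^ 2))) := by
    intro z; ring
  rw [show (fun z : E => (2 - 2 * Real.cos (inner ℝ ξ z : ℝ)) * Real.exp (-(t * ‖z‖ ^ 2))) = _
    from funext expand]
  rw [integral_sub (hint1.const_mul 2) (hint2.const_mul 2), integral_const_mul, integral_const_mul,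
    h1, hcos]
  ring

end Gauss

/-- The Lévy-measure integral `∫ |e^{iξ·z} − 1|² |z|^{-d-2s} dz = a_{s,d}^{-1} |ξ|^{2s}`. -/
theorem levy_integral (d : ℕ) (hd : 1 ≤ d) (s : ℝ) (hs0 : 0 < s) (hs1 : s < 1)
    (ξ : EuclideanSpace ℝ (Fin d)) :
    ∫ z : EuclideanSpace ℝ (Fin d),
        ‖Complex.exp (Complex.I * ((inner ℝ ξ z : ℝ) : ℂ)) - 1‖ ^ 2 / ‖z‖ ^ ((d : ℝ) + 2 * s) =
      (aConst s d)⁻¹ * ‖ξ‖ ^ (2 * s) := by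
  rcases eq_or_ne ξ 0 with rfl | hξ
  · have hz : ∀ z : EuclideanSpace ℝ (Fin d),
        ‖Complex.exp (Complex.I * ((inner ℝ (0 : EuclideanSpace ℝ (Fin d)) z : ℝ) : ℂ)) - 1‖ ^ 2 /
          ‖z‖ ^ ((d : ℝ) + 2 * s) = 0 := by
      intro z; simp
    simp only [hz, integral_zero, norm_zero]
    rw [Real.zero_rpow (by positivity : 2 * s ≠ 0), mul_zero]
  -- main case
  have hnξ : 0 < ‖ξ‖ := norm_pos_iff.mpr hξ
  set p : ℝ := ((d : ℝ) + 2 * s) / 2 with hp_def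
  have hp : 0 < p := by positivity
  have hΓp : 0 < Real.Gamma p := Real.Gamma_pos_of_pos hp
  have hΓ1s : 0 < Real.Gamma (1 - s) := Real.Gamma_pos_of_pos (by linarith)
  set c : ℝ := ‖ξ‖ ^ 2 / 4 with hc_def
  have hc : 0 < c := by positivity
  have hcosnn : ∀ z : EuclideanSpace ℝ (Fin d), 0 ≤ 2 - 2 * Real.cos (inner ℝ ξ z : ℝ) :=
    fun z => by nlinarith [Real.cos_le_one (inner ℝ ξ z : ℝ)]
  set f : EuclideanSpace ℝ (Fin d) → ℝ :=
    fun z => (2 - 2 * Real.cos (inner ℝ ξ z : ℝ)) / ‖z‖ ^ ((d : ℝ) + 2 * s) with hf_def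
  have hfnn : ∀ z, 0 ≤ f z := fun z =>
    div_nonneg (hcosnn z) (Real.rpow_nonneg (norm_nonneg z) _)
  have hcosmeas : Measurable fun z : EuclideanSpace ℝ (Fin d) =>
      2 - 2 * Real.cos (inner ℝ ξ z : ℝ) :=
    (continuous_const.sub (continuous_const.mul (Real.continuous_cos.comp
      (Continuous.inner continuous_const continuous_id)))).measurable
  have hfmeas : Measurable f := hcosmeas.div (by fun_prop)
  set G : EuclideanSpace ℝ (Fin d) → ℝ → ℝ≥0∞ := fun z t =>
    ENNReal.ofReal ((2 - 2 * Real.cos (inner ℝ ξ z : ℝ)) * (t ^ (p - 1) *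
      Real.exp (-(t * ‖z‖ ^ 2)))) with hG_def
  have hGmeas : Measurable (Function.uncurry G) := by
    apply ENNReal.measurable_ofReal.comp
    apply Measurable.mul
    · exact (continuous_const.sub (continuous_const.mul (Real.continuous_cos.comp
        (Continuous.inner continuous_const continuous_fst)))).measurable
    · fun_prop
  -- claim (a)
  have ha : ∀ z : EuclideanSpace ℝ (Fin d), z ≠ 0 →
      ∫⁻ t in Ioi (0:ℝ), G z t
        = ENNReal.ofReal (Real.Gamma p) * ENNReal.ofReal (f z) := by
    intro z hz
    have hz0 : 0 < ‖z‖ := norm_pos_iff.mpr hz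
    have hr : 0 < ‖z‖ ^ 2 := by positivity
    have hint : IntegrableOn (fun t : ℝ => t ^ (p - 1) * Real.exp (-(t * ‖z‖ ^ 2)))
        (Ioi 0) := by
      have h0 := integrableOn_rpow_mul_exp_neg_mul_rpow (p := 1) (s := p - 1)
        (b := ‖z‖ ^ 2) (by linarith) one_pos hr
      apply h0.congr_fun _ measurableSet_Ioi
      intro t ht
      dsimp only
      rw [Real.rpow_one]
      ring_nf
    have hval : ∫ t in Ioi (0:ℝ), t ^ (p - 1) * Real.exp (-(t * ‖z‖ ^ 2))
        = (1 / ‖z‖ ^ 2) ^ p * Real.Gamma p := by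
      rw [← Real.integral_rpow_mul_exp_neg_mul_Ioi hp hr]
      apply setIntegral_congr_fun measurableSet_Ioi
      intro t ht
      dsimp only
      rw [mul_comm t]
    calc ∫⁻ t in Ioi (0:ℝ), G z t
        = ∫⁻ t in Ioi (0:ℝ), ENNReal.ofReal (2 - 2 * Real.cos (inner ℝ ξ z : ℝ)) *
            ENNReal.ofReal (t ^ (p - 1) * Real.exp (-(t * ‖z‖ ^ 2))) := by
          apply lintegral_congr
          intro t
          rw [hG_def, ← ENNReal.ofReal_mul (hcosnn z)]
      _ = ENNReal.ofReal (2 - 2 * Real.cos (inner ℝ ξ z : ℝ)) *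
            ∫⁻ t in Ioi (0:ℝ), ENNReal.ofReal (t ^ (p - 1) * Real.exp (-(t * ‖z‖ ^ 2))) :=
          lintegral_const_mul' _ _ ENNReal.ofReal_ne_top
      _ = ENNReal.ofReal (2 - 2 * Real.cos (inner ℝ ξ z : ℝ)) *
            ENNReal.ofReal ((1 / ‖z‖ ^ 2) ^ p * Real.Gamma p) := by
          rw [← ofReal_integral_eq_lintegral_ofReal hint, hval]
          filter_upwards [ae_restrict_mem measurableSet_Ioi] with t ht
          exact mul_nonneg (Real.rpow_nonneg (le_of_lt ht) _) (Real.exp_pos _).le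
      _ = ENNReal.ofReal (Real.Gamma p) * ENNReal.ofReal (f z) := by
          rw [← ENNReal.ofReal_mul (hcosnn z), ← ENNReal.ofReal_mul hΓp.le]
          congr 1
          have hkey : (1 / ‖z‖ ^ 2 : ℝ) ^ p = (‖z‖ ^ ((d : ℝ) + 2 * s))⁻¹ := by
            rw [one_div, ← Real.rpow_natCast ‖z‖ 2,
              Real.inv_rpow (Real.rpow_nonneg (norm_nonneg z) _),
              ← Real.rpow_mul (norm_nonneg z)]
            congr 1
            push_cast
            rw [hp_def]
            ring
          rw [hkey, hf_def]
          simp only [div_eq_mul_inv]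
          ring
  -- claim (b)
  have hb : ∀ t ∈ Ioi (0:ℝ),
      ∫⁻ z : EuclideanSpace ℝ (Fin d), G z t
        = ENNReal.ofReal (t ^ (p - 1) * ((π / t) ^ ((d:ℝ) / 2) *
            (2 - 2 * Real.exp (-(‖ξ‖ ^ 2 / (4 * t)))))) := by
    intro t ht
    have ht0 : (0:ℝ) < t := ht
    have hnn : ∀ z : EuclideanSpace ℝ (Fin d),
        0 ≤ (2 - 2 * Real.cos (inner ℝ ξ z : ℝ)) * Real.exp (-(t * ‖z‖ ^ 2)) := fun z =>
      mul_nonneg (hcosnn z) (Real.exp_pos _).le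
    calc ∫⁻ z : EuclideanSpace ℝ (Fin d), G z t
        = ∫⁻ z : EuclideanSpace ℝ (Fin d), ENNReal.ofReal (t ^ (p - 1)) *
            ENNReal.ofReal ((2 - 2 * Real.cos (inner ℝ ξ z : ℝ)) * Real.exp (-(t * ‖z‖ ^ 2))) := by
          apply lintegral_congr
          intro z
          rw [hG_def, ← ENNReal.ofReal_mul (Real.rpow_nonneg ht0.le _)]
          congr 1
          ring
      _ = ENNReal.ofReal (t ^ (p - 1)) *
            ∫⁻ z : EuclideanSpace ℝ (Fin d),
              ENNReal.ofReal ((2 - 2 * Real.cos (inner ℝ ξ z : ℝ)) * Real.exp (-(t * ‖z‖ ^ 2))) :=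
          lintegral_const_mul' _ _ ENNReal.ofReal_ne_top
      _ = ENNReal.ofReal (t ^ (p - 1)) *
            ENNReal.ofReal ((π / t) ^ ((d:ℝ) / 2) * (2 - 2 * Real.exp (-(‖ξ‖ ^ 2 / (4 * t))))) := by
          rw [← ofReal_integral_eq_lintegral_ofReal (aux_integrable_cos_gauss ht0 ξ)
            (ae_of_all _ hnn), aux_gauss_integral ht0 ξ]
      _ = _ := by rw [← ENNReal.ofReal_mul (Real.rpow_nonneg ht0.le _)]
  -- the big identity
  have hbig : ENNReal.ofReal (Real.Gamma p) *
      ∫⁻ z : EuclideanSpace ℝ (Fin d), ENNReal.ofReal (f z)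
        = ENNReal.ofReal (2 * π ^ ((d:ℝ) / 2) * (c ^ s * (Real.Gamma (1 - s) / s))) := by
    have hae : ∀ᵐ z : EuclideanSpace ℝ (Fin d), z ≠ 0 := by
      haveI : Nonempty (Fin d) := ⟨⟨0, hd⟩⟩
      rw [ae_iff]
      simpa using measure_singleton (0 : EuclideanSpace ℝ (Fin d))
    calc ENNReal.ofReal (Real.Gamma p) * ∫⁻ z : EuclideanSpace ℝ (Fin d), ENNReal.ofReal (f z)
        = ∫⁻ z : EuclideanSpace ℝ (Fin d),
            ENNReal.ofReal (Real.Gamma p) * ENNReal.ofReal (f z) :=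
          (lintegral_const_mul' _ _ ENNReal.ofReal_ne_top).symm
      _ = ∫⁻ z : EuclideanSpace ℝ (Fin d), ∫⁻ t in Ioi (0:ℝ), G z t := by
          apply lintegral_congr_ae
          filter_upwards [hae] with z hz
          exact (ha z hz).symm
      _ = ∫⁻ t in Ioi (0:ℝ), ∫⁻ z : EuclideanSpace ℝ (Fin d), G z t :=
          lintegral_lintegral_swap hGmeas.aemeasurable
      _ = ∫⁻ t in Ioi (0:ℝ), ENNReal.ofReal (2 * π ^ ((d:ℝ) / 2) *
            (t ^ (s - 1) * (1 - Real.exp (-(c / t))))) := by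
          apply setLIntegral_congr_fun measurableSet_Ioi
          intro t ht
          beta_reduce
          rw [hb t ht]
          congr 1
          have ht0 : (0:ℝ) < t := ht
          have h1 : ‖ξ‖ ^ 2 / (4 * t) = c / t := by rw [hc_def]; field_simp
          have h2 : (π / t) ^ ((d:ℝ) / 2) = π ^ ((d:ℝ) / 2) * (t ^ ((d:ℝ) / 2))⁻¹ := by
            rw [Real.div_rpow Real.pi_pos.le ht0.le, div_eq_mul_inv]
          have h3 : t ^ (p - 1) * (t ^ ((d:ℝ) / 2))⁻¹ = t ^ (s - 1) := by
            rw [← Real.rpow_neg ht0.le, ← Real.rpow_add ht0]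
            congr 1
            rw [hp_def]; ring
          rw [h1, h2, ← h3]
          ring
      _ = ENNReal.ofReal (2 * π ^ ((d:ℝ) / 2) *
            ∫ t in Ioi (0:ℝ), t ^ (s - 1) * (1 - Real.exp (-(c / t)))) := by
          have h2P : (0:ℝ) ≤ 2 * π ^ ((d:ℝ) / 2) := by positivity
          calc ∫⁻ t in Ioi (0:ℝ), ENNReal.ofReal (2 * π ^ ((d:ℝ) / 2) *
                (t ^ (s - 1) * (1 - Real.exp (-(c / t)))))
              = ∫⁻ t in Ioi (0:ℝ), ENNReal.ofReal (2 * π ^ ((d:ℝ) / 2)) *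
                  ENNReal.ofReal (t ^ (s - 1) * (1 - Real.exp (-(c / t)))) := by
                apply lintegral_congr
                intro t
                rw [← ENNReal.ofReal_mul h2P]
            _ = ENNReal.ofReal (2 * π ^ ((d:ℝ) / 2)) *
                  ∫⁻ t in Ioi (0:ℝ), ENNReal.ofReal (t ^ (s - 1) * (1 - Real.exp (-(c / t)))) :=
                lintegral_const_mul' _ _ ENNReal.ofReal_ne_top
            _ = ENNReal.ofReal (2 * π ^ ((d:ℝ) / 2)) *
                  ENNReal.ofReal (∫ t in Ioi (0:ℝ), t ^ (s - 1) * (1 - Real.exp (-(c / t)))) := by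
                rw [← ofReal_integral_eq_lintegral_ofReal (aux_integrableJ hs0 hs1 hc)]
                filter_upwards [ae_restrict_mem measurableSet_Ioi] with t ht
                exact mul_nonneg (Real.rpow_nonneg (le_of_lt ht) _)
                  (aux_oneSubExp_nonneg (div_nonneg hc.le (le_of_lt ht)))
            _ = _ := (ENNReal.ofReal_mul h2P).symm
      _ = ENNReal.ofReal (2 * π ^ ((d:ℝ) / 2) * (c ^ s * (Real.Gamma (1 - s) / s))) := by
          rw [aux_integralJ hs0 hs1 hc, aux_integralK hs0 hs1]
  -- conclude
  have hΓ0 : ENNReal.ofReal (Real.Gamma p) ≠ 0 := by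
    simp only [ne_eq, ENNReal.ofReal_eq_zero, not_le]
    exact hΓp
  have hL : ∫⁻ z : EuclideanSpace ℝ (Fin d), ENNReal.ofReal (f z)
      = ENNReal.ofReal (2 * π ^ ((d:ℝ) / 2) * (c ^ s * (Real.Gamma (1 - s) / s)) /
          Real.Gamma p) := by
    rw [ENNReal.ofReal_div_of_pos hΓp, ENNReal.eq_div_iff hΓ0 ENNReal.ofReal_ne_top]
    exact hbig
  calc ∫ z : EuclideanSpace ℝ (Fin d),
        ‖Complex.exp (Complex.I * ((inner ℝ ξ z : ℝ) : ℂ)) - 1‖ ^ 2 / ‖z‖ ^ ((d : ℝ) + 2 * s)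
      = ∫ z : EuclideanSpace ℝ (Fin d), f z := by
        apply integral_congr_ae
        apply ae_of_all
        intro z
        rw [hf_def]
        simp only [aux_norm_exp_I_sub_one]
    _ = (∫⁻ z : EuclideanSpace ℝ (Fin d), ENNReal.ofReal (f z)).toReal :=
        integral_eq_lintegral_of_nonneg_ae (ae_of_all _ hfnn) hfmeas.aestronglyMeasurable
    _ = 2 * π ^ ((d:ℝ) / 2) * (c ^ s * (Real.Gamma (1 - s) / s)) / Real.Gamma p := by
        rw [hL, ENNReal.toReal_ofReal]
        positivity
    _ = (aConst s d)⁻¹ * ‖ξ‖ ^ (2 * s) := by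
        have := aux_final_arith hs0 hs1 hd hnξ
        rw [hc_def, hp_def]
        rw [← this]
end
end

section
/- For every 0 < α < 1 one has ∫_0^1 (1 − t^{(1−α)/2})² / (1−t)² dt = (1−α) ( ψ(2−α) − ψ(3/2 − α/2) ), where ψ = Γ'/Γ denotes the digamma function. -/
set_option maxHeartbeats 1000000

open MeasureTheory Real Set Filter Topology

noncomputable section

/-- The digamma function `ψ = Γ'/Γ`. -/
def digamma (x : ℝ) : ℝ := deriv Real.Gamma x / Real.Gamma x

lemma ne_neg_nat {y : ℝ} (hy : 0 < y) (m : ℕ) : y ≠ -(m : ℝ) :=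
  ne_of_gt ((neg_nonpos.2 m.cast_nonneg).trans_lt hy)

lemma digamma_eq_deriv_log_Gamma {x : ℝ} (hx : 0 < x) :
    digamma x = deriv (Real.log ∘ Real.Gamma) x := by
  rw [Function.comp_def, deriv.log (Real.differentiableAt_Gamma (ne_neg_nat hx))
    (Real.Gamma_pos_of_pos hx).ne', digamma]

lemma diffAt_logGamma {y : ℝ} (hy : 0 < y) :
    DifferentiableAt ℝ (Real.log ∘ Real.Gamma) y :=
  (Real.differentiableAt_Gamma (ne_neg_nat hy)).log
    (Real.Gamma_ne_zero (ne_neg_nat hy))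

lemma deriv_logGamma_rec {x : ℝ} (hx : 0 < x) :
    deriv (Real.log ∘ Real.Gamma) (x + 1) = deriv (Real.log ∘ Real.Gamma) x + 1 / x := by
  have h_rec : ∀ y : ℝ, 0 < y →
      (Real.log ∘ Real.Gamma) (y + 1) = (Real.log ∘ Real.Gamma) y + Real.log y := by
    intro y hy
    simp only [Function.comp_apply, Real.Gamma_add_one hy.ne',
      Real.log_mul hy.ne' (Real.Gamma_pos_of_pos hy).ne', add_comm]
  rw [← deriv_comp_add_const, one_div, ← Real.deriv_log,
    ← deriv_add (diffAt_logGamma hx) (Real.differentiableAt_log hx.ne')]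
  apply Filter.EventuallyEq.deriv_eq
  filter_upwards [eventually_gt_nhds hx] using h_rec

lemma deriv_logGamma_nat {x : ℝ} (hx : 0 < x) (n : ℕ) :
    deriv (Real.log ∘ Real.Gamma) (x + n) =
      deriv (Real.log ∘ Real.Gamma) x + ∑ k ∈ Finset.range n, 1 / (x + k) := by
  induction n with
  | zero => simp
  | succ n ih =>
      have h : x + (n + 1 : ℕ) = (x + n) + 1 := by push_cast; ring
      rw [h, deriv_logGamma_rec (by positivity), ih, Finset.sum_range_succ]
      ring

lemma digamma_sub_hasSum {a c : ℝ} (ha : 1 ≤ a) (hc0 : 0 < c) (hc1 : c ≤ 1) :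
    HasSum (fun k : ℕ => 1 / (a + k) - 1 / (a + c + k)) (digamma (a + c) - digamma a) := by
  have ha0 : 0 < a := lt_of_lt_of_le one_pos ha
  have hmono : MonotoneOn (deriv (Real.log ∘ Real.Gamma)) (Ioi 0) := by
    exact (Real.convexOn_log_Gamma).monotoneOn_deriv (fun y hy => diffAt_logGamma hy)
  have key : ∀ n : ℕ, ∑ k ∈ Finset.range n, (1 / (a + k) - 1 / (a + c + k)) =
      (digamma (a + c) - digamma a) +
        (deriv (Real.log ∘ Real.Gamma) (a + n) - deriv (Real.log ∘ Real.Gamma) (a + c + n)) := by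
    intro n
    have h1 := deriv_logGamma_nat ha0 n
    have h2 := deriv_logGamma_nat (x := a + c) (by positivity) n
    rw [Finset.sum_sub_distrib]
    rw [digamma_eq_deriv_log_Gamma ha0, digamma_eq_deriv_log_Gamma (by positivity)]
    have e1 : ∑ k ∈ Finset.range n, 1 / (a + k) =
        deriv (Real.log ∘ Real.Gamma) (a + n) - deriv (Real.log ∘ Real.Gamma) a := by
      rw [h1]; ring
    have e2 : ∑ k ∈ Finset.range n, 1 / (a + c + k) =
        deriv (Real.log ∘ Real.Gamma) (a + c + n) - deriv (Real.log ∘ Real.Gamma) (a + c) := by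
      rw [h2]; ring
    rw [e1, e2]; ring
  have herr : Tendsto (fun n : ℕ =>
      deriv (Real.log ∘ Real.Gamma) (a + n) - deriv (Real.log ∘ Real.Gamma) (a + c + n))
      atTop (nhds 0) := by
    have hbound : ∀ n : ℕ,
        deriv (Real.log ∘ Real.Gamma) (a + c + n) - deriv (Real.log ∘ Real.Gamma) (a + n)
          ∈ Icc (0:ℝ) ((a + n)⁻¹) := by
      intro n
      have h1 : (0:ℝ) < a + n := by positivity
      have h2 : (0:ℝ) < a + c + n := by positivity
      constructor
      · have := hmono (mem_Ioi.2 h1) (mem_Ioi.2 h2) (by linarith)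
        linarith
      · have hstep : deriv (Real.log ∘ Real.Gamma) (a + n + 1) =
            deriv (Real.log ∘ Real.Gamma) (a + n) + 1 / (a + n) := deriv_logGamma_rec h1
        have := hmono (mem_Ioi.2 h2) (mem_Ioi.2 (show (0:ℝ) < a + n + 1 by positivity))
          (by linarith)
        rw [one_div] at hstep
        linarith
    have hT : Tendsto (fun n : ℕ => (a + (n:ℝ))) atTop atTop :=
      tendsto_atTop_add_const_left _ a tendsto_natCast_atTop_atTop
    have h0 : Tendsto (fun n : ℕ => (a + (n:ℝ))⁻¹) atTop (nhds 0) :=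
      tendsto_inv_atTop_zero.comp hT
    have hsq := squeeze_zero (fun n => (hbound n).1) (fun n => (hbound n).2) h0
    simpa [neg_sub] using hsq.neg
  have hlim : Tendsto (fun n : ℕ => ∑ k ∈ Finset.range n, (1 / (a + k) - 1 / (a + c + k)))
      atTop (nhds (digamma (a + c) - digamma a)) := by
    have h := tendsto_const_nhds (x := digamma (a + c) - digamma a) (f := atTop (α := ℕ)) |>.add herr
    rw [add_zero] at h
    exact h.congr (fun n => (key n).symm)
  have hg2 : Summable (fun k : ℕ => 1 / ((k : ℝ) + 1) ^ 2) := by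
    have h2 : Summable (fun n : ℕ => 1 / ((n : ℝ)) ^ 2) :=
      summable_one_div_nat_pow.2 one_lt_two
    have := (summable_nat_add_iff 1).2 h2
    simpa using this
  have hsummable : Summable (fun k : ℕ => 1 / (a + k) - 1 / (a + c + k)) := by
    refine Summable.of_nonneg_of_le (fun k => ?_) (fun k => ?_) hg2
    · have h1 : (0:ℝ) < a + k := by positivity
      have h2 : (0:ℝ) < a + c + k := by positivity
      rw [sub_nonneg]
      gcongr
      linarith
    · have h1 : (0:ℝ) < a + k := by positivity
      have h2 : (0:ℝ) < a + c + k := by positivity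
      have hk1 : ((k:ℝ) + 1) ≤ a + k := by linarith
      have hk2 : ((k:ℝ) + 1) ≤ a + c + k := by linarith
      have he : 1 / (a + k) - 1 / (a + c + k) = c / ((a + k) * (a + c + k)) := by
        field_simp
        ring
      rw [he]
      calc c / ((a + k) * (a + c + k)) ≤ 1 / (((k:ℝ) + 1) * ((k:ℝ) + 1)) := by
              gcongr <;> positivity
        _ = 1 / ((k:ℝ) + 1) ^ 2 := by ring_nf
  have hs := hsummable.hasSum
  have heq := tendsto_nhds_unique (hs.tendsto_sum_nat) hlim
  rwa [heq] at hs



lemma integral_eq_tsum (β : ℝ) (hβ0 : 0 < β) (hβ1 : β < 1) :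
    ∫ t in (0:ℝ)..1, (1 - t ^ β) ^ 2 / (1 - t) ^ 2 =
      ∑' k : ℕ, 2 * β ^ 2 / (((k:ℝ) + 1 + β) * ((k:ℝ) + 1 + 2 * β)) := by
  set F : ℕ → ℝ → ℝ := fun k t => ((k:ℝ) + 1) * ((1 - t ^ β) ^ 2 * t ^ (k:ℝ)) with hF
  have hcont : ∀ k : ℕ, Continuous (F k) := by
    intro k
    exact continuous_const.mul ((((continuous_const.sub
      (Real.continuous_rpow_const hβ0.le)).pow 2)).mul (Real.continuous_rpow_const (by positivity)))
  -- value of each integral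
  have hval : ∀ k : ℕ, ∫ t in (0:ℝ)..1, F k t
      = 2 * β ^ 2 / (((k:ℝ) + 1 + β) * ((k:ℝ) + 1 + 2 * β)) := by
    intro k
    have heq : EqOn (F k) (fun t => ((k:ℝ)+1) * t ^ (k:ℝ) - 2*((k:ℝ)+1) * t ^ ((k:ℝ)+β)
        + ((k:ℝ)+1) * t ^ ((k:ℝ)+2*β)) (Set.uIcc (0:ℝ) 1) := by
      intro t ht
      rcases eq_or_lt_of_le (by simpa [Set.uIcc_of_le (zero_le_one (α := ℝ))] using ht.1 :
        (0:ℝ) ≤ t) with h0 | h0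
      · simp only [hF, ← h0, Real.zero_rpow hβ0.ne',
          Real.zero_rpow (show (k:ℝ)+β ≠ 0 by positivity),
          Real.zero_rpow (show (k:ℝ)+2*β ≠ 0 by positivity)]
        ring
      · have e1 : t ^ ((k:ℝ) + β) = t ^ (k:ℝ) * t ^ β := Real.rpow_add h0 _ _
        have e2 : t ^ ((k:ℝ) + 2*β) = t ^ (k:ℝ) * (t ^ β * t ^ β) := by
          rw [show (k:ℝ) + 2*β = (k:ℝ) + β + β by ring, Real.rpow_add h0, Real.rpow_add h0]
          ring
        simp only [hF, e1, e2]
        ring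
    rw [intervalIntegral.integral_congr heq]
    have i1 : IntervalIntegrable (fun t : ℝ => ((k:ℝ)+1) * t ^ (k:ℝ)) volume 0 1 :=
      (intervalIntegral.intervalIntegrable_rpow' (by have := k.cast_nonneg (α := ℝ); linarith)).const_mul _
    have i2 : IntervalIntegrable (fun t : ℝ => 2*((k:ℝ)+1) * t ^ ((k:ℝ)+β)) volume 0 1 :=
      (intervalIntegral.intervalIntegrable_rpow' (by have := k.cast_nonneg (α := ℝ); linarith)).const_mul _
    have i3 : IntervalIntegrable (fun t : ℝ => ((k:ℝ)+1) * t ^ ((k:ℝ)+2*β)) volume 0 1 :=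
      (intervalIntegral.intervalIntegrable_rpow' (by have := k.cast_nonneg (α := ℝ); linarith)).const_mul _
    rw [intervalIntegral.integral_add (i1.sub i2) i3, intervalIntegral.integral_sub i1 i2,
      intervalIntegral.integral_const_mul, intervalIntegral.integral_const_mul,
      intervalIntegral.integral_const_mul]
    have hrpow : ∀ r : ℝ, 0 ≤ r → ∫ t in (0:ℝ)..1, t ^ r = 1 / (r + 1) := by
      intro r hr
      rw [integral_rpow (Or.inl (by linarith))]
      rw [Real.one_rpow, Real.zero_rpow (by positivity)]
      ring
    rw [hrpow _ (by positivity), hrpow _ (by positivity), hrpow _ (by positivity)]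
    have d1 : ((k:ℝ) + 1) ≠ 0 := by positivity
    have d2 : ((k:ℝ) + β + 1) ≠ 0 := by positivity
    have d3 : ((k:ℝ) + 2*β + 1) ≠ 0 := by positivity
    have d4 : ((k:ℝ) + 1 + β) ≠ 0 := by positivity
    have d5 : ((k:ℝ) + 1 + 2*β) ≠ 0 := by positivity
    field_simp
    ring
  -- nonnegativity on Ioc
  have hnn : ∀ k : ℕ, ∀ t ∈ Ioc (0:ℝ) 1, 0 ≤ F k t := by
    intro k t ht
    have h1 : t ^ β ≤ 1 := Real.rpow_le_one ht.1.le ht.2 hβ0.le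
    have h2 : (0:ℝ) ≤ t ^ (k:ℝ) := Real.rpow_nonneg ht.1.le _
    have : (0:ℝ) ≤ (1 - t ^ β) ^ 2 := sq_nonneg _
    positivity
  -- integrability
  have hF_int : ∀ k : ℕ, Integrable (F k) (volume.restrict (Ioc (0:ℝ) 1)) := by
    intro k
    exact (hcont k).integrableOn_Ioc
  -- the norms integrals are summable
  have hIocval : ∀ k : ℕ, ∫ t in Ioc (0:ℝ) 1, F k t
      = 2 * β ^ 2 / (((k:ℝ) + 1 + β) * ((k:ℝ) + 1 + 2 * β)) := by
    intro k
    rw [← intervalIntegral.integral_of_le zero_le_one, hval k]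
  have hnormval : ∀ k : ℕ, (∫ t in Ioc (0:ℝ) 1, ‖F k t‖)
      = 2 * β ^ 2 / (((k:ℝ) + 1 + β) * ((k:ℝ) + 1 + 2 * β)) := by
    intro k
    rw [← hIocval k]
    exact setIntegral_congr_fun measurableSet_Ioc (fun t ht => Real.norm_of_nonneg (hnn k t ht))
  have hg2 : Summable (fun k : ℕ => 1 / ((k : ℝ) + 1) ^ 2) := by
    have h2 : Summable (fun n : ℕ => 1 / ((n : ℝ)) ^ 2) :=
      summable_one_div_nat_pow.2 one_lt_two
    have := (summable_nat_add_iff 1).2 h2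
    simpa using this
  have hVsum : Summable (fun k : ℕ => 2 * β ^ 2 / (((k:ℝ) + 1 + β) * ((k:ℝ) + 1 + 2 * β))) := by
    refine Summable.of_nonneg_of_le (fun k => by positivity) (fun k => ?_) (hg2.mul_left (2*β^2))
    have hk1 : ((k:ℝ) + 1) ≤ (k:ℝ) + 1 + β := by linarith
    have hk2 : ((k:ℝ) + 1) ≤ (k:ℝ) + 1 + 2*β := by linarith
    calc 2 * β ^ 2 / (((k:ℝ) + 1 + β) * ((k:ℝ) + 1 + 2 * β))
        ≤ 2 * β ^ 2 / (((k:ℝ) + 1) * ((k:ℝ) + 1)) := by gcongr <;> positivity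
      _ = 2 * β ^ 2 * (1 / ((k:ℝ) + 1) ^ 2) := by ring
  have hF_sum : Summable (fun k : ℕ => ∫ t in Ioc (0:ℝ) 1, ‖F k t‖) := by
    simpa only [hnormval] using hVsum
  have hS := MeasureTheory.hasSum_integral_of_summable_integral_norm hF_int hF_sum
  -- identify the integral of the tsum
  have hpt : ∀ t ∈ Ioo (0:ℝ) 1, HasSum (fun k => F k t) ((1 - t ^ β) ^ 2 / (1 - t) ^ 2) := by
    intro t ht
    have hlt : ‖t‖ < 1 := by rw [Real.norm_of_nonneg ht.1.le]; exact ht.2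
    have hg : HasSum (fun n : ℕ => ((n:ℝ) + 1) * t ^ n) (1 / (1 - t) ^ 2) := by
      have h1 := hasSum_coe_mul_geometric_of_norm_lt_one (𝕜 := ℝ) hlt
      have h2 := hasSum_geometric_of_norm_lt_one (ξ := t) hlt
      have h3 := h1.add h2
      have he : t / (1 - t) ^ 2 + (1 - t)⁻¹ = 1 / (1 - t) ^ 2 := by
        have : (1:ℝ) - t ≠ 0 := by intro h; nlinarith [ht.2]
        field_simp
        ring
      rw [he] at h3
      exact h3.congr_fun (fun n => by push_cast; ring)
    have hout := hg.mul_left ((1 - t ^ β) ^ 2)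
    rw [mul_one_div] at hout
    refine hout.congr_fun (fun k => ?_)
    simp only [hF, Real.rpow_natCast]
    ring
  calc ∫ t in (0:ℝ)..1, (1 - t ^ β) ^ 2 / (1 - t) ^ 2
      = ∫ t in Ioc (0:ℝ) 1, (1 - t ^ β) ^ 2 / (1 - t) ^ 2 :=
        intervalIntegral.integral_of_le zero_le_one
    _ = ∫ t in Ioo (0:ℝ) 1, (1 - t ^ β) ^ 2 / (1 - t) ^ 2 := integral_Ioc_eq_integral_Ioo
    _ = ∫ t in Ioo (0:ℝ) 1, ∑' k : ℕ, F k t :=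
        setIntegral_congr_fun measurableSet_Ioo (fun t ht => ((hpt t ht).tsum_eq).symm)
    _ = ∫ t in Ioc (0:ℝ) 1, ∑' k : ℕ, F k t := integral_Ioc_eq_integral_Ioo.symm
    _ = ∑' k : ℕ, ∫ t in Ioc (0:ℝ) 1, F k t := hS.tsum_eq.symm
    _ = ∑' k : ℕ, 2 * β ^ 2 / (((k:ℝ) + 1 + β) * ((k:ℝ) + 1 + 2 * β)) := tsum_congr hIocval


/-- `∫_0^1 (1 − t^{(1−α)/2})²/(1−t)² dt = (1−α)(ψ(2−α) − ψ(3/2 − α/2))`. -/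
theorem integral_digamma_identity (α : ℝ) (hα0 : 0 < α) (hα1 : α < 1) :
    ∫ t in (0 : ℝ)..1, (1 - t ^ ((1 - α) / 2)) ^ 2 / (1 - t) ^ 2 =
      (1 - α) * (digamma (2 - α) - digamma (3 / 2 - α / 2)) := by
  set β := (1 - α) / 2 with hβ
  have hβ0 : 0 < β := by rw [hβ]; linarith
  have hβ1 : β < 1 := by rw [hβ]; linarith
  have hA := digamma_sub_hasSum (a := 1 + β) (c := β) (by linarith) hβ0 (by linarith)
  have hA2 := (hA.mul_left (2 * β)).tsum_eq
  rw [integral_eq_tsum β hβ0 hβ1]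
  have hcongr : ∀ k : ℕ, 2 * β ^ 2 / (((k:ℝ) + 1 + β) * ((k:ℝ) + 1 + 2 * β))
      = 2 * β * (1 / (1 + β + (k:ℝ)) - 1 / (1 + β + β + (k:ℝ))) := by
    intro k
    have d1 : ((k:ℝ) + 1 + β) ≠ 0 := by positivity
    have d2 : ((k:ℝ) + 1 + 2 * β) ≠ 0 := by positivity
    have d3 : (1 + β + (k:ℝ)) ≠ 0 := by positivity
    have d4 : (1 + β + β + (k:ℝ)) ≠ 0 := by positivity
    field_simp
    ring
  rw [tsum_congr hcongr, hA2]
  have e1 : 1 + β + β = 2 - α := by rw [hβ]; ring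
  have e2 : 1 + β = 3 / 2 - α / 2 := by rw [hβ]; ring
  rw [e1, e2, show 2 * β = 1 - α by rw [hβ]; ring]
end
end
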